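/- arXiv:math/0012139 — 4 statements merged into one kernel-verified Lean document; each statement's English description precedes it below -/
import Mathlib

section
/- Let p be an odd prime and let Δ be the ring endomorphism of ℤ_p[[X]] sending Σ a_i X^i to Σ a_i X^{pi} (Frobenius on ℤ_p is the identity). For every α ∈ ℤ_p[[X]] with α ≡ 1 mod X (i.e. α a principal unit of the power series ring), the series α^p / α^Δ is congruent to 1 modulo the ideal (p, X^p)·(X), and in particular (1/p)·log(α^p/α^Δ) is a well-defined element of ℤ_p[[X]]. -/
open PowerSeries

/-!
Modulo `p`, `Δ` becomes the Frobenius `f ↦ f ^ p` of `𝔽_p[[X]]`, so `α ^ p ≡ α^Δ mod p`; as both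
sides have constant term `1`, `α ^ p - α^Δ ∈ p X ℤ_p[[X]]` and `u = α ^ p / α^Δ = 1 + p s` with
`s ∈ X ℤ_p[[X]]`. The `m`-th term of `log u` is `± p ^ m s ^ m / m`, which lies in `p ℤ_p[[X]]`
because `v_p(m) < m`, i.e. `m ∣ p ^ (m - 1)` in `ℤ_p`.
-/

/-- The Frobenius lift `Δ` on `ℤ_p[[X]]`: `(Σ aᵢ Xⁱ)^Δ = Σ aᵢ X^{pi}`
(the Frobenius on `ℤ_p` is the identity). -/
noncomputable def Delta (p : ℕ) [Fact p.Prime] (f : PowerSeries ℤ_[p]) : PowerSeries ℤ_[p] :=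
  PowerSeries.mk fun k => if p ∣ k then coeff (k / p) f else 0

/-- The formal logarithm `log(1+T) = Σ_{m≥1} (-1)^{m+1} T^m / m`, applied to `f = 1 + T`,
computed coefficientwise (only finitely many terms contribute to each coefficient when
the constant coefficient of `f - 1` vanishes). -/
noncomputable def plog {F : Type*} [Field F] (f : PowerSeries F) : PowerSeries F :=
  PowerSeries.mk fun k =>
    ∑ m ∈ Finset.Icc 1 k, ((-1 : F) ^ (m + 1) / (m : F)) * coeff k ((f - 1) ^ m)

theorem Delta_eq_expand (p : ℕ) [hp : Fact p.Prime] (f : PowerSeries ℤ_[p]) :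
    Delta p f = expand p hp.out.ne_zero f := by
  ext k
  simp [Delta, coeff_expand]

theorem constantCoeff_Delta (p : ℕ) [Fact p.Prime] (f : PowerSeries ℤ_[p]) :
    constantCoeff (Delta p f) = constantCoeff f := by
  rw [Delta_eq_expand, constantCoeff_expand]

theorem PowerSeries.expand_eq_pow_zmod (p : ℕ) [hp : Fact p.Prime] (f : PowerSeries (ZMod p)) :
    expand p hp.out.ne_zero f = f ^ p := by
  have h := MvPowerSeries.map_frobenius_expand p hp.out.ne_zero (f := f)
  rw [ZMod.frobenius_zmod, MvPowerSeries.map_id] at h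
  exact h

theorem map_toZMod_pow_sub_Delta (p : ℕ) [Fact p.Prime] (α : PowerSeries ℤ_[p]) :
    map PadicInt.toZMod (α ^ p - Delta p α) = 0 := by
  rw [map_sub, map_pow, Delta_eq_expand, map_expand, expand_eq_pow_zmod, sub_self]

theorem exists_eq_natCast_mul_of_map_toZMod_eq_zero {p : ℕ} [Fact p.Prime]
    {φ : PowerSeries ℤ_[p]} (h : map PadicInt.toZMod φ = 0) :
    ∃ γ, φ = (p : PowerSeries ℤ_[p]) * γ := by
  have hdvd (k : ℕ) : (p : ℤ_[p]) ∣ coeff k φ := by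
    rw [← Ideal.mem_span_singleton, ← PadicInt.maximalIdeal_eq_span_p, ← PadicInt.ker_toZMod,
      RingHom.mem_ker, ← coeff_map, h, map_zero]
  choose c hc using hdvd
  exact ⟨mk c, by ext k; rw [← map_natCast C, coeff_C_mul, coeff_mk, hc]⟩

theorem exists_pow_sub_Delta_eq_natCast_mul_X_mul (p : ℕ) [hp : Fact p.Prime]
    {α : PowerSeries ℤ_[p]} (hα : constantCoeff α = 1) :
    ∃ γ, α ^ p - Delta p α = (p : PowerSeries ℤ_[p]) * X * γ := by
  obtain ⟨γ, hγ⟩ := exists_eq_natCast_mul_of_map_toZMod_eq_zero (map_toZMod_pow_sub_Delta p α)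
  have hγ0 : constantCoeff γ = 0 := by
    have h := congrArg constantCoeff hγ
    rw [map_sub, map_pow, constantCoeff_Delta, hα, one_pow, sub_self, map_mul, map_natCast] at h
    exact (mul_eq_zero.1 h.symm).resolve_left (Nat.cast_ne_zero.2 hp.out.ne_zero)
  obtain ⟨γ', rfl⟩ := X_dvd_iff.2 hγ0
  exact ⟨γ', by rw [hγ, mul_assoc]⟩

theorem PadicInt.natCast_dvd_pow_pred (p : ℕ) [hp : Fact p.Prime] {m : ℕ} (hm : m ≠ 0) :
    (m : ℤ_[p]) ∣ (p : ℤ_[p]) ^ (m - 1) := by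
  obtain ⟨v, m', hm', rfl⟩ := Nat.exists_eq_pow_mul_and_not_dvd hm p hp.out.ne_one
  have hunit : IsUnit (m' : ℤ_[p]) := PadicInt.isUnit_iff.2
    (PadicInt.norm_natCast_eq_one_iff.2 ((Nat.Prime.coprime_iff_not_dvd hp.out).2 hm'))
  have hv : v ≤ p ^ v * m' - 1 := by
    have := Nat.lt_pow_self (n := v) hp.out.one_lt
    have : 0 < m' := Nat.pos_of_ne_zero (by rintro rfl; simp at hm)
    have : p ^ v ≤ p ^ v * m' := Nat.le_mul_of_pos_right _ this
    omega
  rw [Nat.cast_mul, Nat.cast_pow, hunit.mul_right_dvd]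
  exact pow_dvd_pow _ hv

theorem exists_plog_eq_natCast_mul (p : ℕ) [Fact p.Prime] {u s : PowerSeries ℤ_[p]}
    (hu : u - 1 = (p : PowerSeries ℤ_[p]) * s) :
    ∃ L : PowerSeries ℤ_[p],
      plog (map (PadicInt.Coe.ringHom (p := p)) u) =
        (p : PowerSeries ℚ_[p]) * map (PadicInt.Coe.ringHom (p := p)) L := by
  choose! c hc using fun m (hm : m ≠ 0) => PadicInt.natCast_dvd_pow_pred p hm
  refine ⟨mk fun k => ∑ m ∈ Finset.Icc 1 k, (-1) ^ (m + 1) * c m * coeff k (s ^ m), ?_⟩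
  have hU : map PadicInt.Coe.ringHom u - 1 =
      (p : PowerSeries ℚ_[p]) * map PadicInt.Coe.ringHom s := by
    rw [← map_one (map PadicInt.Coe.ringHom), ← map_sub, hu, map_mul, map_natCast]
  ext k
  rw [plog, coeff_mk, hU, ← map_natCast C, coeff_C_mul, coeff_map, coeff_mk, map_sum,
    Finset.mul_sum]
  refine Finset.sum_congr rfl fun m hm => ?_
  have hm0 : m ≠ 0 := by simp at hm; omega
  have hpm : (p : ℤ_[p]) ^ m = p * (m * c m) := by
    rw [← hc m hm0, ← pow_succ', Nat.sub_add_cancel (Nat.one_le_iff_ne_zero.2 hm0)]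
  have hpm' := congrArg PadicInt.Coe.ringHom hpm
  rw [map_pow, map_mul, map_mul, map_natCast, map_natCast] at hpm'
  rw [mul_pow, ← map_pow C, coeff_C_mul, ← map_pow (map _), coeff_map, hpm']
  simp only [map_mul, map_pow, map_neg, map_one]
  have : (m : ℚ_[p]) ≠ 0 := Nat.cast_ne_zero.2 hm0
  field_simp

theorem vostokov_stmt2_general (p : ℕ) [Fact p.Prime]
    (α : PowerSeries ℤ_[p]) (hα : constantCoeff α = 1) :
    ∃ u : (PowerSeries ℤ_[p])ˣ,
      (u : PowerSeries ℤ_[p]) * Delta p α = α ^ p ∧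
      (u : PowerSeries ℤ_[p]) - 1 ∈
        Ideal.span {(p : PowerSeries ℤ_[p]), X ^ p} * Ideal.span {(X : PowerSeries ℤ_[p])} ∧
      ∃ L : PowerSeries ℤ_[p],
        plog (PowerSeries.map (PadicInt.Coe.ringHom (p := p)) (u : PowerSeries ℤ_[p])) =
          (p : PowerSeries ℚ_[p]) * PowerSeries.map (PadicInt.Coe.ringHom (p := p)) L := by
  have isUnit_of_constantCoeff_eq_one {f : PowerSeries ℤ_[p]} (hf : constantCoeff f = 1) :
      IsUnit f := by
    rw [isUnit_iff_constantCoeff, hf]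
    exact isUnit_one
  obtain ⟨v, hv⟩ := isUnit_of_constantCoeff_eq_one (by rw [constantCoeff_Delta, hα])
  obtain ⟨w, hw⟩ := isUnit_of_constantCoeff_eq_one (f := α ^ p) (by rw [map_pow, hα, one_pow])
  obtain ⟨γ, hγ⟩ := exists_pow_sub_Delta_eq_natCast_mul_X_mul p hα
  have hu : ((w * v⁻¹ : (PowerSeries ℤ_[p])ˣ) : PowerSeries ℤ_[p]) - 1 =
      (p : PowerSeries ℤ_[p]) *
        (X * (γ * ((v⁻¹ : (PowerSeries ℤ_[p])ˣ) : PowerSeries ℤ_[p]))) := by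
    rw [Units.val_mul, ← Units.mul_inv v, ← sub_mul, hv, hw, hγ, mul_assoc, mul_assoc]
  refine ⟨w * v⁻¹, ?_, ?_, exists_plog_eq_natCast_mul p hu⟩
  · rw [← hv, ← hw, Units.val_mul, mul_assoc, Units.inv_mul, mul_one]
  · rw [hu, mul_left_comm, mul_comm X]
    exact Ideal.mul_mem_mul (Ideal.mul_mem_right _ _ (Ideal.subset_span (Set.mem_insert _ _)))
      (Ideal.subset_span (Set.mem_singleton _))

/-- for `p` an odd prime and `α ∈ ℤ_p[[X]]` with `α ≡ 1 mod X`,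
the series `α^p / α^Δ` is `≡ 1` modulo the ideal `(p, X^p)·(X)`, and
`(1/p)·log(α^p/α^Δ)` is a well-defined element of `ℤ_p[[X]]`. -/
theorem vostokov_stmt2 (p : ℕ) [Fact p.Prime] (hp : p ≠ 2)
    (α : PowerSeries ℤ_[p]) (hα : constantCoeff α = 1) :
    ∃ u : (PowerSeries ℤ_[p])ˣ,
      (u : PowerSeries ℤ_[p]) * Delta p α = α ^ p ∧
      (u : PowerSeries ℤ_[p]) - 1 ∈
        Ideal.span {(p : PowerSeries ℤ_[p]), X ^ p} * Ideal.span {(X : PowerSeries ℤ_[p])} ∧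
      ∃ L : PowerSeries ℤ_[p],
        plog (PowerSeries.map (PadicInt.Coe.ringHom (p := p)) (u : PowerSeries ℤ_[p])) =
          (p : PowerSeries ℚ_[p]) * PowerSeries.map (PadicInt.Coe.ringHom (p := p)) L :=
  vostokov_stmt2_general p α hα
end

section
/- Let p be a prime and let Δ be the endomorphism of ℚ_p[[X]] with X^Δ = X^p (coefficients fixed). The Artin–Hasse type exponential E(f) = exp((1 + Δ/p + Δ²/p² + ...)(f)) sends X·ℤ_p[[X]] into 1 + X·ℤ_p[[X]]; i.e., for f ∈ X·ℤ_p[[X]], E(f) has coefficients in ℤ_p. -/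
/-!
Write `u = AHop p f` and `F = pexp u`. The operator satisfies `p • u = p • f + Δ u`, so
exponentiating gives Dwork's identity `F ^ p = exp (p • f) * Δ F`, where `exp (p • f) ≡ 1` modulo
`p` coefficientwise because `v_p(m!) < m`. The coefficients of `F` are then integral by induction:
if those below `n` are, write `F ≡ T mod X ^ n` with `T` integral; comparing the coefficients of
`X ^ n` in Dwork's identity and using the Frobenius congruence `T ^ p ≡ Δ T mod p` shows that
`p * coeff n F` lies in `p ℤ_p`.
-/

open PowerSeries

/-- The Artin–Hasse type operator `1 + Δ/p + Δ²/p² + ⋯` on `ℚ_p[[X]]`, where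
`Δ` is the endomorphism with `X^Δ = X^p` (coefficients fixed); computed
coefficientwise (the coefficient of `X^n` of `Δ^k f / p^k` is
`(coeff (n/p^k) f)/p^k` if `p^k ∣ n` and `0` otherwise, and for `n ≥ 1` only
`k ≤ n` can contribute). -/
noncomputable def AHop (p : ℕ) [Fact p.Prime] (f : PowerSeries ℚ_[p]) : PowerSeries ℚ_[p] :=
  PowerSeries.mk fun n =>
    ∑ k ∈ Finset.range (n + 1),
      if p ^ k ∣ n then coeff (n / p ^ k) f / (p : ℚ_[p]) ^ k else 0

/-- The formal exponential `exp(f) = Σ_{m≥0} f^m / m!`, computed coefficientwise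
(only the terms with `m ≤ k` contribute to the coefficient of `X^k` when the
constant coefficient of `f` vanishes). -/
noncomputable def pexp {F : Type*} [Field F] [CharZero F] (f : PowerSeries F) : PowerSeries F :=
  PowerSeries.mk fun k =>
    ∑ m ∈ Finset.range (k + 1), coeff k (f ^ m) / (Nat.factorial m : F)

theorem PowerSeries.coeff_pow_eq_zero_of_lt {R : Type*} [CommSemiring R] {f : R⟦X⟧}
    (hf : constantCoeff f = 0) {k m : ℕ} (h : k < m) : coeff k (f ^ m) = 0 :=
  coeff_of_lt_order _ ((Nat.cast_lt.mpr h).trans_le (le_order_pow_of_constantCoeff_eq_zero m hf))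

section pexp

variable {F : Type*} [Field F] [CharZero F] {u v : F⟦X⟧}

theorem pexp_eq_subst_exp (hu : constantCoeff u = 0) : pexp u = subst u (exp F) := by
  ext k
  rw [coeff_subst' (HasSubst.of_constantCoeff_zero' hu),
    finsum_eq_sum_of_support_subset (s := Finset.range (k + 1))]
  · simp [pexp, coeff_exp, div_eq_inv_mul]
  · intro m hm
    by_contra hmk
    simp only [Finset.coe_range, Set.mem_Iio, not_lt] at hmk
    exact hm (by simp only; rw [coeff_pow_eq_zero_of_lt hu (by omega), smul_zero])

theorem constantCoeff_pexp (u : F⟦X⟧) : constantCoeff (pexp u) = 1 := by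
  rw [← coeff_zero_eq_constantCoeff_apply]
  simp [pexp]

theorem derivative_pexp (hu : constantCoeff u = 0) :
    d⁄dX F (pexp u) = pexp u * d⁄dX F u := by
  rw [pexp_eq_subst_exp hu, derivative_subst (HasSubst.of_constantCoeff_zero' hu),
    derivative_exp]

theorem pexp_mul_pexp_neg (hu : constantCoeff u = 0) : pexp u * pexp (-u) = 1 := by
  have hnu : constantCoeff (-u) = 0 := by rw [map_neg, hu, neg_zero]
  refine derivative.ext ?_ (by simp [constantCoeff_pexp])
  rw [Derivation.leibniz, derivative_pexp hu, derivative_pexp hnu, map_neg, derivative_one]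
  simp only [smul_eq_mul]
  ring

theorem pexp_add (hu : constantCoeff u = 0) (hv : constantCoeff v = 0) :
    pexp (u + v) = pexp u * pexp v := by
  have huv : constantCoeff (u + v) = 0 := by rw [map_add, hu, hv, add_zero]
  have hnu : constantCoeff (-u) = 0 := by rw [map_neg, hu, neg_zero]
  have hnv : constantCoeff (-v) = 0 := by rw [map_neg, hv, neg_zero]
  have key : pexp (u + v) * pexp (-u) * pexp (-v) = 1 := by
    refine derivative.ext ?_ (by simp [constantCoeff_pexp])
    rw [Derivation.leibniz, Derivation.leibniz, derivative_pexp huv, derivative_pexp hnu,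
      derivative_pexp hnv, derivative_one]
    simp only [smul_eq_mul, map_add, map_neg]
    ring
  linear_combination (pexp u * pexp v) * key -
    pexp (u + v) * pexp v * pexp (-v) * pexp_mul_pexp_neg hu - pexp (u + v) * pexp_mul_pexp_neg hv

theorem pexp_zero : pexp (0 : F⟦X⟧) = 1 :=
  derivative.ext (by rw [derivative_pexp (map_zero _), map_zero, mul_zero, derivative_one])
    (by rw [constantCoeff_pexp, map_one])

theorem pexp_nsmul (hu : constantCoeff u = 0) (m : ℕ) : pexp (m • u) = pexp u ^ m := by
  induction m with
  | zero => rw [zero_smul, pexp_zero, pow_zero]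
  | succ m ih =>
    rw [succ_nsmul, pexp_add (by simp [hu]) hu, ih, pow_succ]

theorem expand_pexp (hu : constantCoeff u = 0) (q : ℕ) (hq : q ≠ 0) :
    expand q hq (pexp u) = pexp (expand q hq u) := by
  rw [pexp_eq_subst_exp hu, pexp_eq_subst_exp (by rw [constantCoeff_expand, hu])]
  exact expand_subst q hq (HasSubst.of_constantCoeff_zero' hu) _

end pexp

section AHop

variable {p : ℕ} [hp : Fact p.Prime] {f : ℚ_[p]⟦X⟧}

theorem coeff_AHop_eq_sum_range (hf : constantCoeff f = 0) {n N : ℕ} (hN : n ≤ N) :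
    coeff n (AHop p f) = ∑ k ∈ Finset.range N,
      if p ^ k ∣ n then coeff (n / p ^ k) f / (p : ℚ_[p]) ^ k else 0 := by
  have hvanish : ∀ k, n ≤ k →
      (if p ^ k ∣ n then coeff (n / p ^ k) f / (p : ℚ_[p]) ^ k else 0) = 0 := by
    intro k hk
    rcases Nat.eq_zero_or_pos n with rfl | hn
    · simp [hf]
    · rw [if_neg fun h => (Nat.le_of_dvd hn h).not_gt
        (hk.trans_lt (Nat.lt_pow_self hp.out.one_lt))]
  have hn : coeff n (AHop p f) = ∑ k ∈ Finset.range n,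
      if p ^ k ∣ n then coeff (n / p ^ k) f / (p : ℚ_[p]) ^ k else 0 := by
    rw [AHop, coeff_mk, Finset.sum_range_succ, hvanish n le_rfl, add_zero]
  rw [hn]
  exact Finset.sum_subset (Finset.range_subset_range.mpr hN) fun k hkN hkn =>
    hvanish k (by simpa using hkn)

theorem constantCoeff_AHop (hf : constantCoeff f = 0) : constantCoeff (AHop p f) = 0 := by
  rw [← coeff_zero_eq_constantCoeff_apply, coeff_AHop_eq_sum_range hf le_rfl,
    Finset.sum_range_zero]

theorem natCast_smul_AHop (hf : constantCoeff f = 0) :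
    (p : ℚ_[p]) • AHop p f = (p : ℚ_[p]) • f + expand p hp.out.ne_zero (AHop p f) := by
  ext n
  rw [map_add, coeff_smul, coeff_smul, coeff_expand, smul_eq_mul, smul_eq_mul,
    coeff_AHop_eq_sum_range hf (Nat.le_succ n), Finset.mul_sum, Finset.sum_range_succ',
    add_comm]
  simp only [pow_zero, one_dvd, Nat.div_one, div_one, if_true]
  congr 1
  -- term `k + 1` of `p • AHop p f` at `X ^ n` is term `k` of `AHop p f` at `X ^ (n / p)`
  split_ifs with hpn
  · rw [coeff_AHop_eq_sum_range hf (Nat.div_le_self n p)]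
    refine Finset.sum_congr rfl fun k _ => ?_
    have hdvd : p ^ (k + 1) ∣ n ↔ p ^ k ∣ n / p := by
      rw [Nat.dvd_div_iff_mul_dvd hpn, pow_succ']
    have hp0 : (p : ℚ_[p]) ≠ 0 := Nat.cast_ne_zero.mpr hp.out.ne_zero
    by_cases hk : p ^ k ∣ n / p
    · rw [if_pos (hdvd.mpr hk), if_pos hk, Nat.div_div_eq_div_mul, ← pow_succ']
      field_simp
      ring
    · rw [if_neg (mt hdvd.mp hk), if_neg hk, mul_zero]
  · refine Finset.sum_eq_zero fun k _ => ?_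
    rw [if_neg fun h => hpn ((dvd_pow_self p k.succ_ne_zero).trans h), mul_zero]

theorem pexp_AHop_pow (hf : constantCoeff f = 0) :
    pexp (AHop p f) ^ p =
      pexp ((p : ℚ_[p]) • f) * expand p hp.out.ne_zero (pexp (AHop p f)) := by
  have hu := constantCoeff_AHop hf
  rw [← pexp_nsmul hu, ← Nat.cast_smul_eq_nsmul ℚ_[p], natCast_smul_AHop hf,
    pexp_add (by simp [hf]) (by simp [hu]), expand_pexp hu]

end AHop

theorem PowerSeries.coeff_pow_eq_coeff_trunc_pow_add {R : Type*} [CommRing R] {F : R⟦X⟧}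
    (hF : constantCoeff F = 1) {n : ℕ} (hn : 0 < n) (m : ℕ) :
    coeff n (F ^ m) = coeff n ((trunc n F : R⟦X⟧) ^ m) + m * coeff n F := by
  set T : R⟦X⟧ := (trunc n F : R⟦X⟧)
  have hcoeffT (k : ℕ) : coeff k T = if k < n then coeff k F else 0 := by
    rw [Polynomial.coeff_coe, coeff_trunc]
  have hT : constantCoeff T = 1 := by
    rw [← coeff_zero_eq_constantCoeff_apply, hcoeffT, if_pos hn,
      coeff_zero_eq_constantCoeff_apply, hF]
  obtain ⟨E, hE⟩ : X ^ n ∣ F - T :=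
    X_pow_dvd_iff.mpr fun k hk => by rw [map_sub, hcoeffT, if_pos hk, sub_self]
  have hEn : coeff n F = constantCoeff E := by
    have h := congrArg (coeff n) hE
    rwa [map_sub, hcoeffT, if_neg n.lt_irrefl, sub_zero, coeff_X_pow_mul', if_pos le_rfl,
      Nat.sub_self, coeff_zero_eq_constantCoeff_apply] at h
  have hS : constantCoeff (∑ i ∈ Finset.range m, F ^ i * T ^ (m - 1 - i)) = m := by
    simp [hF, hT]
  -- `F ^ m - T ^ m = (∑ i < m, F ^ i * T ^ (m - 1 - i)) * X ^ n * E`, and the sum has constant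
  -- coefficient `m`.
  rw [← sub_eq_iff_eq_add', ← map_sub, ← geom_sum₂_mul, hE, mul_left_comm, coeff_X_pow_mul',
    if_pos le_rfl, Nat.sub_self, coeff_zero_eq_constantCoeff_apply, map_mul, hS, hEn]

theorem PowerSeries.norm_coeff_mul_sub_coeff_le {R : Type*} [NormedCommRing R]
    [IsUltrametricDist R] {G H : R⟦X⟧} {r : ℝ} (hr : 0 ≤ r) {n : ℕ}
    (hG : ∀ i ≤ n, ‖coeff i (G - 1)‖ ≤ r) (hH : ∀ j ≤ n, ‖coeff j H‖ ≤ 1) :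
    ‖coeff n (G * H) - coeff n H‖ ≤ r := by
  rw [← map_sub, ← sub_one_mul, coeff_mul]
  refine IsUltrametricDist.norm_sum_le_of_forall_le_of_nonneg hr fun x hx => ?_
  calc ‖coeff x.1 (G - 1) * coeff x.2 H‖ ≤ ‖coeff x.1 (G - 1)‖ * ‖coeff x.2 H‖ :=
        norm_mul_le _ _
    _ ≤ r * 1 := mul_le_mul (hG _ (Finset.HasAntidiagonal.antidiagonal.fst_le hx))
        (hH _ (Finset.HasAntidiagonal.antidiagonal.snd_le hx)) (norm_nonneg _) hr
    _ = r := mul_one r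

section Padic

variable {p : ℕ} [hp : Fact p.Prime]

theorem Padic.norm_p_pow_div_factorial_le {m : ℕ} (hm : m ≠ 0) :
    ‖(p : ℚ_[p]) ^ m / (m.factorial : ℚ_[p])‖ ≤ (p : ℝ)⁻¹ := by
  have hv := padicValNat_factorial_lt_of_ne_zero p hm
  rw [norm_div, Padic.norm_p_pow,
    Padic.norm_eq_zpow_neg_valuation (Nat.cast_ne_zero.mpr m.factorial_ne_zero),
    Padic.valuation_natCast, ← zpow_sub₀ (by exact_mod_cast hp.out.ne_zero), ← zpow_neg_one]
  exact zpow_le_zpow_right₀ (by exact_mod_cast hp.out.one_le) (by omega)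

theorem PadicInt.norm_coeff_pow_sub_coeff_expand_le (T : Polynomial ℤ_[p]) (n : ℕ) :
    ‖(T ^ p).coeff n - (Polynomial.expand ℤ_[p] p T).coeff n‖ ≤ (p : ℝ)⁻¹ := by
  have hmem : (T ^ p).coeff n - (Polynomial.expand ℤ_[p] p T).coeff n ∈
      Ideal.span {(p : ℤ_[p]) ^ 1} := by
    rw [pow_one, ← PadicInt.maximalIdeal_eq_span_p, ← PadicInt.ker_toZMod, RingHom.mem_ker,
      map_sub, ← Polynomial.coeff_map, ← Polynomial.coeff_map, Polynomial.map_pow,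
      Polynomial.map_expand, ZMod.expand_card, sub_self]
  simpa using (PadicInt.norm_le_pow_iff_mem_span_pow _ 1).mpr hmem

theorem norm_coeff_pexp_p_smul_sub_one_le (g : ℤ_[p]⟦X⟧) (n : ℕ) :
    ‖coeff n (pexp ((p : ℚ_[p]) • map (PadicInt.Coe.ringHom (p := p)) g) - 1)‖ ≤
      (p : ℝ)⁻¹ := by
  rw [map_sub, pexp, coeff_mk, Finset.sum_range_succ', pow_zero, Nat.factorial_zero,
    Nat.cast_one, div_one, add_sub_cancel_right]
  refine IsUltrametricDist.norm_sum_le_of_forall_le_of_nonneg (by positivity) fun m _ => ?_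
  rw [smul_pow, coeff_smul, ← map_pow, coeff_map, smul_eq_mul, mul_div_right_comm, norm_mul]
  calc _ ≤ (p : ℝ)⁻¹ * 1 :=
        mul_le_mul (Padic.norm_p_pow_div_factorial_le m.succ_ne_zero)
          (coeff n (g ^ (m + 1))).2 (norm_nonneg _) (by positivity)
    _ = (p : ℝ)⁻¹ := mul_one _

theorem trunc_mem_lifts_of_norm_coeff_le_one {F : ℚ_[p]⟦X⟧} {n : ℕ}
    (h : ∀ k < n, ‖coeff k F‖ ≤ 1) :
    trunc n F ∈ Polynomial.lifts (PadicInt.Coe.ringHom (p := p)) := by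
  refine (Polynomial.lifts_iff_coeff_lifts _).mpr fun k => ?_
  rw [coeff_trunc]
  split_ifs with hk
  · exact ⟨⟨_, h k hk⟩, rfl⟩
  · exact ⟨0, map_zero _⟩

theorem norm_coeff_le_one_of_pow_eq_mul_expand {F G : ℚ_[p]⟦X⟧} (hF : constantCoeff F = 1)
    (hG : ∀ i, ‖coeff i (G - 1)‖ ≤ (p : ℝ)⁻¹) (hFG : F ^ p = G * expand p hp.out.ne_zero F)
    (n : ℕ) : ‖coeff n F‖ ≤ 1 := by
  induction n using Nat.strong_induction_on with
  | _ n ih =>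
  rcases Nat.eq_zero_or_pos n with rfl | hn
  · simp [hF]
  obtain ⟨T, hT⟩ := trunc_mem_lifts_of_norm_coeff_le_one ih
  have hexpand : ∀ j ≤ n,
      coeff j (expand p hp.out.ne_zero F) = (Polynomial.expand ℤ_[p] p T).coeff j := by
    intro j hj
    rw [coeff_expand, Polynomial.coeff_expand hp.out.pos]
    split_ifs
    · have hlt : j / p < n :=
        (Nat.div_le_div_right hj).trans_lt (Nat.div_lt_self hn hp.out.one_lt)
      have hcoeff := coeff_trunc (j / p) n F
      rw [if_pos hlt, ← hT, Polynomial.coe_mapRingHom, Polynomial.coeff_map] at hcoeff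
      exact hcoeff.symm
    · rfl
  have hpow : coeff n (F ^ p) = (T ^ p).coeff n + p * coeff n F := by
    rw [coeff_pow_eq_coeff_trunc_pow_add hF hn, ← hT, ← Polynomial.coe_pow, Polynomial.coeff_coe,
      ← map_pow, Polynomial.coe_mapRingHom, Polynomial.coeff_map]
    rfl
  have hG_mul := norm_coeff_mul_sub_coeff_le (by positivity) (fun i _ => hG i)
    fun j hj => (hexpand j hj).symm ▸ ((Polynomial.expand ℤ_[p] p T).coeff j).2
  have hfrob := PadicInt.norm_coeff_pow_sub_coeff_expand_le T n
  rw [norm_sub_rev, PadicInt.norm_def, PadicInt.coe_sub] at hfrob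
  have hpF : ‖(p : ℚ_[p]) * coeff n F‖ ≤ (p : ℝ)⁻¹ := by
    -- `p * F_n = (F ^ p)_n - (T ^ p)_n`, where `F ^ p = G * Δ F` and `(Δ F)_n = (Δ T)_n`
    have key : (p : ℚ_[p]) * coeff n F =
        (coeff n (G * expand p hp.out.ne_zero F) - coeff n (expand p hp.out.ne_zero F)) +
          ((Polynomial.expand ℤ_[p] p T).coeff n - (T ^ p).coeff n) := by
      rw [← hFG, hpow, hexpand n le_rfl]
      ring
    rw [key]
    exact (IsUltrametricDist.norm_add_le_max _ _).trans (max_le hG_mul hfrob)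
  rw [norm_mul, Padic.norm_p] at hpF
  exact le_of_mul_le_mul_left (by rwa [mul_one]) (inv_pos.mpr (by exact_mod_cast hp.out.pos))

theorem exists_map_coe_eq_of_norm_coeff_le_one {F : ℚ_[p]⟦X⟧}
    (h : ∀ n, ‖coeff n F‖ ≤ 1) : ∃ g : ℤ_[p]⟦X⟧, map (PadicInt.Coe.ringHom (p := p)) g = F :=
  ⟨mk fun n => (⟨coeff n F, h n⟩ : ℤ_[p]), by
    ext n
    rw [coeff_map]
    exact congrArg Subtype.val (coeff_mk (R := ℤ_[p]) n _)⟩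

end Padic

/-- the Artin–Hasse type exponential
`E(f) = exp((1 + Δ/p + Δ²/p² + ⋯)(f))` sends `X·ℤ_p[[X]]` into `1 + X·ℤ_p[[X]]`:
for `f ∈ X·ℤ_p[[X]]`, `E(f)` has coefficients in `ℤ_p` and constant term `1`. -/
theorem vostokov_stmt3 (p : ℕ) [Fact p.Prime]
    (f : PowerSeries ℤ_[p]) (hf : constantCoeff f = 0) :
    ∃ g : PowerSeries ℤ_[p], constantCoeff g = 1 ∧
      PowerSeries.map (PadicInt.Coe.ringHom (p := p)) g =
        pexp (AHop p (PowerSeries.map (PadicInt.Coe.ringHom (p := p)) f)) := by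
  have hf' : constantCoeff (map (PadicInt.Coe.ringHom (p := p)) f) = 0 := by
    rw [← coeff_zero_eq_constantCoeff_apply, coeff_map, coeff_zero_eq_constantCoeff_apply, hf,
      map_zero]
  obtain ⟨g, hg⟩ := exists_map_coe_eq_of_norm_coeff_le_one <|
    norm_coeff_le_one_of_pow_eq_mul_expand (constantCoeff_pexp _)
      (norm_coeff_pexp_p_smul_sub_one_le f) (pexp_AHop_pow hf')
  have hg0 := congrArg (coeff 0) hg
  rw [coeff_map, coeff_zero_eq_constantCoeff_apply, coeff_zero_eq_constantCoeff_apply,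
    constantCoeff_pexp] at hg0
  exact ⟨g, (map_eq_one_iff _ Subtype.val_injective).mp hg0, hg⟩
end

section
/- Let K be a field with discrete valuation v and residue field k. The tame symbol satisfies the Steinberg relation: for α ∈ K^* with α ≠ 1, the tame symbol of (α, 1-α) equals 1 in k^*. -/
/-!
In every case the symbol is an integer power of a principal unit `1 - β` with `v β > 0`,
whose residue is `1`: for `v α > 0` it is `(1 - α) ^ (-v α)`; for `v α < 0` one has
`v (1 - α) = v α`, and the sign `(-1) ^ (v α ^ 2) = (-1) ^ v α` turns it into
`(1 - α⁻¹) ^ (-v α)`; for `v α = 0` it is `α ^ v (1 - α) = (1 - (1 - α)) ^ v (1 - α)`,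
where `v (1 - α) ≥ 0` (and the symbol is `1` if `v (1 - α) = 0`).
-/

section Valuation

variable {K : Type*} [Field K] {v : K → ℤ}

theorem val_one_of_val_mul (hmul : ∀ x y : K, x ≠ 0 → y ≠ 0 → v (x * y) = v x + v y) :
    v 1 = 0 := by
  have := hmul 1 1 one_ne_zero one_ne_zero
  rw [mul_one] at this
  omega

theorem val_inv_of_val_mul (hmul : ∀ x y : K, x ≠ 0 → y ≠ 0 → v (x * y) = v x + v y)
    {y : K} (hy : y ≠ 0) : v y⁻¹ = -v y := by
  have := hmul y y⁻¹ hy (inv_ne_zero hy)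
  rw [mul_inv_cancel₀ hy, val_one_of_val_mul hmul] at this
  omega

theorem val_neg_of_val_mul (hmul : ∀ x y : K, x ≠ 0 → y ≠ 0 → v (x * y) = v x + v y)
    {y : K} (hy : y ≠ 0) : v (-y) = v y := by
  have hsq := hmul (-1) (-1) (by norm_num) (by norm_num)
  rw [neg_mul_neg, one_mul, val_one_of_val_mul hmul] at hsq
  have := hmul (-1) y (by norm_num) hy
  rw [neg_one_mul] at this
  omega

end Valuation

/-- `O` is the valuation ring of `v` and `ρ` its residue map onto `k`. -/
structure IsResidueMap {K k : Type*} [Field K] [Field k] (v : K → ℤ) (O : Subring K)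
    (ρ : O →+* k) : Prop where
  val_mul : ∀ x y : K, x ≠ 0 → y ≠ 0 → v (x * y) = v x + v y
  nonneg_iff_mem : ∀ x : K, x ≠ 0 → (0 ≤ v x ↔ x ∈ O)
  map_eq_zero_iff : ∀ x : O, ρ x = 0 ↔ (x : K) = 0 ∨ 0 < v (x : K)

namespace IsResidueMap

variable {K k : Type*} [Field K] [Field k] {v : K → ℤ} {O : Subring K} {ρ : O →+* k}

theorem mem_of_nonneg (h : IsResidueMap v O ρ) {x : K} (hx : 0 ≤ v x) : x ∈ O := by
  rcases eq_or_ne x 0 with rfl | hx0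
  · exact O.zero_mem
  · exact (h.nonneg_iff_mem x hx0).1 hx

theorem one_sub_mem (h : IsResidueMap v O ρ) {β : K} (hβ : 0 < v β) : 1 - β ∈ O :=
  O.sub_mem O.one_mem (h.mem_of_nonneg hβ.le)

theorem map_one_sub (h : IsResidueMap v O ρ) {β : K} (hβ : 0 < v β) :
    ρ ⟨1 - β, h.one_sub_mem hβ⟩ = 1 := by
  have hρβ : ρ ⟨β, h.mem_of_nonneg hβ.le⟩ = 0 := (h.map_eq_zero_iff _).2 (Or.inr hβ)
  have hsplit : (⟨1 - β, h.one_sub_mem hβ⟩ : O) = 1 - ⟨β, h.mem_of_nonneg hβ.le⟩ :=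
    Subtype.ext (by push_cast; ring)
  rw [hsplit, map_sub, map_one, hρβ, sub_zero]

/-- `1 - β` reduces to `1 ≠ 0`, so it is a unit of `O`. -/
theorem val_one_sub_of_pos (h : IsResidueMap v O ρ) {β : K} (hβ : 0 < v β) :
    v (1 - β) = 0 := by
  have hne : (1 : K) - β ≠ 0 := by
    intro h0
    rw [← sub_eq_zero.mp h0, val_one_of_val_mul h.val_mul] at hβ
    exact hβ.false
  have hnonneg : 0 ≤ v (1 - β) := (h.nonneg_iff_mem _ hne).2 (h.one_sub_mem hβ)
  have hnotpos : ¬ 0 < v (1 - β) := fun hpos => by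
    have := (h.map_eq_zero_iff ⟨1 - β, h.one_sub_mem hβ⟩).2 (Or.inr hpos)
    rw [h.map_one_sub hβ] at this
    exact one_ne_zero this
  omega

theorem val_one_sub_of_neg (h : IsResidueMap v O ρ) {β : K} (hβ0 : β ≠ 0) (hβ : v β < 0) :
    v (1 - β) = v β := by
  have hvinv : 0 < v β⁻¹ := by rw [val_inv_of_val_mul h.val_mul hβ0]; omega
  have hne : (1 : K) - β⁻¹ ≠ 0 := by
    intro h0
    rw [← sub_eq_zero.mp h0, val_one_of_val_mul h.val_mul] at hvinv
    exact hvinv.false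
  have hfactor : (1 : K) - β = -β * (1 - β⁻¹) := by field_simp; ring
  rw [hfactor, h.val_mul _ _ (neg_ne_zero.mpr hβ0) hne, val_neg_of_val_mul h.val_mul hβ0,
    h.val_one_sub_of_pos hvinv, add_zero]

theorem map_eq_one_of_eq_one_sub_zpow (h : IsResidueMap v O ρ) {β : K} (hβ : 0 < v β)
    {x : O} {n : ℤ} (hx : (x : K) = (1 - β) ^ n) : ρ x = 1 := by
  set u : O := ⟨1 - β, h.one_sub_mem hβ⟩
  have hρu : ρ u = 1 := h.map_one_sub hβ
  have hu : (u : K) ≠ 0 := fun h0 => by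
    rw [show u = 0 from Subtype.ext h0, map_zero] at hρu
    exact zero_ne_one hρu
  obtain ⟨m, rfl | rfl⟩ := Int.eq_nat_or_neg n
  · have : x = u ^ m := Subtype.ext (by rw [hx, zpow_natCast]; push_cast; rfl)
    rw [this, map_pow, hρu, one_pow]
  · have hxu : x * u ^ m = 1 := Subtype.ext (by
      push_cast
      rw [hx, zpow_neg, zpow_natCast]
      exact inv_mul_cancel₀ (pow_ne_zero m hu))
    simpa only [map_mul, map_pow, hρu, one_pow, mul_one, map_one] using congrArg ρ hxu

end IsResidueMap

theorem neg_one_zpow_mul_self_mul {K : Type*} [Field K] (a : ℤ) {α : K} (hα : α ≠ 0) :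
    (-1 : K) ^ (a * a) * α ^ a * ((1 - α) ^ a)⁻¹ = (1 - α⁻¹) ^ (-a) := by
  have hsign : (-1 : K) ^ (a * a) = (-1) ^ (-a) := by
    rcases Int.even_or_odd a with ha | ha
    · rw [(ha.mul_right a).neg_one_zpow, ha.neg.neg_one_zpow]
    · rw [(ha.mul ha).neg_one_zpow, ha.neg.neg_one_zpow]
  have hfactor : (1 : K) - α⁻¹ = -1 * (1 - α) * α⁻¹ := by field_simp; ring
  rw [hsign, hfactor, mul_zpow, mul_zpow, inv_zpow', neg_neg, zpow_neg (1 - α)]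
  ring

/-- the tame symbol satisfies the Steinberg relation: for `α ∈ K^*`
with `α ≠ 1`, the tame symbol of `(α, 1-α)` equals `1` in the residue field `k^*`.
(The element `(-1)^{v(α)v(1-α)} α^{v(1-α)} (1-α)^{-v(α)}` has valuation `0`, hence
lies in the valuation ring `O`; we quantify over its representatives in `O`.) -/
theorem vostokov_stmt6 {K k : Type*} [Field K] [Field k]
    (v : K → ℤ) (O : Subring K) (ρ : O →+* k)
    (hmul : ∀ x y : K, x ≠ 0 → y ≠ 0 → v (x * y) = v x + v y)
    (hO : ∀ x : K, x ≠ 0 → (0 ≤ v x ↔ x ∈ O))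
    (hker : ∀ x : O, ρ x = 0 ↔ (x : K) = 0 ∨ 0 < v (x : K))
    (α : Kˣ) (hα : (α : K) ≠ 1) (x : O)
    (hx : (x : K) = (-1 : K) ^ (v (α : K) * v (1 - (α : K))) *
        (α : K) ^ v (1 - (α : K)) * ((1 - (α : K)) ^ v (α : K))⁻¹) :
    ρ x = 1 := by
  have h : IsResidueMap v O ρ := ⟨hmul, hO, hker⟩
  have hα0 : (α : K) ≠ 0 := α.ne_zero
  rcases lt_trichotomy (v (α : K)) 0 with hneg | hzero | hpos
  · rw [h.val_one_sub_of_neg hα0 hneg, neg_one_zpow_mul_self_mul _ hα0] at hx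
    refine h.map_eq_one_of_eq_one_sub_zpow ?_ hx
    rw [val_inv_of_val_mul hmul hα0]
    omega
  · rw [hzero, zero_mul, zpow_zero, zpow_zero, inv_one, one_mul, mul_one] at hx
    have hnonneg : 0 ≤ v (1 - (α : K)) := by
      by_contra! hlt
      have := h.val_one_sub_of_neg (sub_ne_zero.mpr (Ne.symm hα)) hlt
      rw [sub_sub_cancel] at this
      omega
    rcases hnonneg.eq_or_lt with hb | hb
    · rw [← hb, zpow_zero] at hx
      rw [show x = 1 from Subtype.ext hx, map_one]
    · rw [← sub_sub_cancel 1 (α : K)] at hx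
      exact h.map_eq_one_of_eq_one_sub_zpow hb hx
  · rw [h.val_one_sub_of_pos hpos, mul_zero, zpow_zero, zpow_zero, one_mul, one_mul, ← zpow_neg] at hx
    exact h.map_eq_one_of_eq_one_sub_zpow hpos hx
end

section
/- Let p be an odd prime and K = ℚ_p(ζ_p). The residue of the formal differential log η(X) · d log ε(X) · X^{-p} at X = 0, for ε(X), η(X) ∈ 1 + X·ℤ_p[[X]], lies in ℤ_p; i.e., the coefficient of X^{-1} in log η(X) · (ε'(X)/ε(X)) · X^{-p} is a p-adic integer. -/
/-! The residue only sees the coefficients of `log η` in degrees `< p`, and those involve only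
the denominators `1, …, p - 1`, which are `p`-adic units; `d log ε = ε'/ε` is integral because
`ε` is a unit of `ℤ_p[[X]]`. -/

open PowerSeries

namespace PowerSeries

theorem coeff_mul_mem_of_forall_le {R : Type*} [CommRing R] {S : Subring R} {f g : R⟦X⟧}
    {n : ℕ} (hf : ∀ k ≤ n, coeff k f ∈ S) (hg : ∀ k ≤ n, coeff k g ∈ S) :
    ∀ k ≤ n, coeff k (f * g) ∈ S := by
  intro k hk
  rw [coeff_mul]
  refine S.sum_mem fun x hx => S.mul_mem (hf _ ?_) (hg _ ?_) <;>
    rw [Finset.HasAntidiagonal.mem_antidiagonal] at hx <;> omega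

section map

variable {A F : Type*} [CommRing A] [Field F] (φ : A →+* F)

theorem coeff_map_mem_range (f : A⟦X⟧) (k : ℕ) : coeff k (map φ f) ∈ φ.range :=
  ⟨coeff k f, (coeff_map φ k f).symm⟩

theorem derivative_map (f : A⟦X⟧) : d⁄dX F (map φ f) = map φ (d⁄dX A f) := by
  ext k
  simp [coeff_derivative]

theorem inv_map_eq_map_invOfUnit (f : A⟦X⟧) (u : Aˣ) (h : constantCoeff f = u) :
    (map φ f)⁻¹ = map φ (invOfUnit f u) := by
  have hφu : constantCoeff (map φ f) ≠ 0 := by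
    simpa [← coeff_zero_eq_constantCoeff_apply, coeff_map, h] using (u.map φ.toMonoidHom).ne_zero
  rw [eq_comm, eq_inv_iff_mul_eq_one hφu, ← map_mul, invOfUnit_mul f u h, map_one]

theorem coeff_plog_map_mem_range (f : A⟦X⟧) {k : ℕ}
    (hk : ∀ m ∈ Finset.Icc 1 k, (m : F)⁻¹ ∈ φ.range) :
    coeff k (plog (map φ f)) ∈ φ.range := by
  rw [plog, coeff_mk]
  refine φ.range.sum_mem fun m hm => ?_
  rw [div_eq_mul_inv, ← map_one (map φ), ← map_sub, ← map_pow]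
  exact φ.range.mul_mem (φ.range.mul_mem (φ.range.pow_mem (φ.range.neg_mem φ.range.one_mem) _)
    (hk m hm)) (coeff_map_mem_range φ _ k)

end map

end PowerSeries

theorem PadicInt.inv_natCast_mem_range_coe {p : ℕ} [Fact p.Prime] {m : ℕ} (hm : p.Coprime m) :
    (m : ℚ_[p])⁻¹ ∈ (PadicInt.Coe.ringHom (p := p)).range :=
  ⟨⟨(m : ℚ_[p])⁻¹, by rw [norm_inv, Padic.norm_natCast_eq_one_iff.2 hm, inv_one]⟩, rfl⟩

theorem vostokov_stmt10_general (p : ℕ) [Fact p.Prime]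
    (ε η : PowerSeries ℤ_[p])
    (hε : constantCoeff ε = 1) :
    ∃ c : ℤ_[p],
      coeff (p - 1)
        (plog (PowerSeries.map (PadicInt.Coe.ringHom (p := p)) η) *
          derivativeFun (PowerSeries.map (PadicInt.Coe.ringHom (p := p)) ε) *
          (PowerSeries.map (PadicInt.Coe.ringHom (p := p)) ε)⁻¹) = (c : ℚ_[p]) := by
  set φ := PadicInt.Coe.ringHom (p := p)
  have hlog : ∀ k ≤ p - 1, coeff k (plog (map φ η)) ∈ φ.range := by
    intro k hk
    refine coeff_plog_map_mem_range φ η fun m hm => PadicInt.inv_natCast_mem_range_coe ?_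
    rw [Finset.mem_Icc] at hm
    exact Nat.coprime_of_lt_prime (by omega) (by omega) Fact.out
  have hdlog : ∀ k ≤ p - 1, coeff k (d⁄dX ℚ_[p] (map φ ε)) ∈ φ.range := fun k _ => by
    rw [derivative_map]
    exact coeff_map_mem_range φ _ k
  have hinv : ∀ k ≤ p - 1, coeff k (map φ ε)⁻¹ ∈ φ.range := fun k _ => by
    rw [inv_map_eq_map_invOfUnit φ ε 1 (by simp [hε])]
    exact coeff_map_mem_range φ _ k
  obtain ⟨c, hc⟩ := coeff_mul_mem_of_forall_le (coeff_mul_mem_of_forall_le hlog hdlog) hinv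
    (p - 1) le_rfl
  exact ⟨c, hc.symm⟩

/-- let `p` be an odd prime.  For `ε(X), η(X) ∈ 1 + X·ℤ_p[[X]]`, the
residue at `X = 0` of `log η(X) · d log ε(X) · X^{-p}`, i.e. the coefficient of
`X^{p-1}` in `log η(X) · ε'(X)/ε(X)`, is a `p`-adic integer. -/
theorem vostokov_stmt10 (p : ℕ) [Fact p.Prime] (hp : p ≠ 2)
    (ε η : PowerSeries ℤ_[p])
    (hε : constantCoeff ε = 1) (hη : constantCoeff η = 1) :
    ∃ c : ℤ_[p],
      coeff (p - 1)
        (plog (PowerSeries.map (PadicInt.Coe.ringHom (p := p)) η) *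
          derivativeFun (PowerSeries.map (PadicInt.Coe.ringHom (p := p)) ε) *
          (PowerSeries.map (PadicInt.Coe.ringHom (p := p)) ε)⁻¹) = (c : ℚ_[p]) :=
  vostokov_stmt10_general p ε η hε
end
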